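/- arXiv:2107.02951 — 2 statements merged into one kernel-verified Lean document; each statement's English description precedes it below -/
import Mathlib

section
/- Let 0 < γ < 2 and let A be the 2×2 real matrix [[0, 1], [−1, −γ]]. Then for all t ≥ 0, the spectral norm of the matrix exponential satisfies ‖exp(At)‖₂ ≤ √((2+γ)/(2−γ)) · e^{−γt/2}. -/
/-!
With `P = [[2, γ], [γ, 2]]` one has `Aᵀ P + P A = -γ P`, so the quadratic form `P` decays exactly
along the flow: `exp(tA)ᵀ P exp(tA) = e^{-γt} P`. Since `(2 - γ)‖x‖² ≤ xᵀ P x ≤ (2 + γ)‖x‖²`,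
this gives `(2 - γ)‖exp(tA) x‖² ≤ e^{-γt} (2 + γ)‖x‖²`.
-/

open NormedSpace
open scoped RealInnerProductSpace

theorem star_exp_smul_mul_mul_exp_smul {𝔸 : Type*} [NormedRing 𝔸] [NormedAlgebra ℝ 𝔸]
    [CompleteSpace 𝔸] [StarRing 𝔸] [ContinuousStar 𝔸] [StarModule ℝ 𝔸] {a p : 𝔸} {c : ℝ}
    (h : star a * p + p * a = c • p) (t : ℝ) :
    star (exp (t • a)) * p * exp (t • a) = Real.exp (c * t) • p := by
  let +nondep : NormedAlgebra ℚ 𝔸 := .restrictScalars ℚ ℝ 𝔸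
  -- `p` intertwines `t • a` with `b`, and `star (t • a)` differs from `-b` by a scalar.
  set b : 𝔸 := (c * t) • 1 - star (t • a)
  have hsemi : SemiconjBy p (t • a) b := by
    rw [SemiconjBy, sub_mul, smul_mul_assoc, one_mul, star_smul, star_trivial, smul_mul_assoc,
      mul_smul_comm, eq_sub_of_add_eq' h, smul_sub, smul_smul, mul_comm]
  have hsplit : star (t • a) = (c * t) • (1 : 𝔸) + -b := by simp only [b]; abel
  have hscalar : exp ((c * t) • (1 : 𝔸)) = Real.exp (c * t) • 1 := by
    rw [← Algebra.algebraMap_eq_smul_one, ← Algebra.algebraMap_eq_smul_one, Real.exp_eq_exp_ℝ,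
      algebraMap_exp_comm]
  rw [star_exp, hsplit, exp_add_of_commute ((Commute.one_left _).smul_left _), hscalar,
    smul_one_mul, smul_mul_assoc, smul_mul_assoc, hsemi.exp_neg_mul_mul_exp_eq_self]

theorem ContinuousLinearMap.norm_le_sqrt_of_star_mul_mul_eq_smul {E : Type*}
    [NormedAddCommGroup E] [InnerProductSpace ℝ E] [CompleteSpace E] {U P : E →L[ℝ] E}
    {m M k : ℝ} (hm : 0 < m) (hk : 0 ≤ k)
    (hlow : ∀ x, m * ‖x‖ ^ 2 ≤ ⟪P x, x⟫) (hup : ∀ x, ⟪P x, x⟫ ≤ M * ‖x‖ ^ 2)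
    (hU : star U * P * U = k • P) :
    ‖U‖ ≤ √(M / m * k) := by
  refine U.opNorm_le_bound (Real.sqrt_nonneg _) fun x => ?_
  have hform : ⟪P (U x), U x⟫ = k * ⟪P x, x⟫ := by
    rw [← adjoint_inner_left, ← star_eq_adjoint]
    change ⟪(star U * P * U) x, x⟫ = _
    rw [hU, smul_apply, real_inner_smul_left]
  have hsq : ‖U x‖ ^ 2 ≤ M / m * k * ‖x‖ ^ 2 := by
    rw [div_mul_eq_mul_div, div_mul_eq_mul_div, le_div_iff₀ hm]
    nlinarith [hlow (U x), hup x]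
  rw [← Real.sqrt_sq (norm_nonneg (U x)), ← Real.sqrt_sq (norm_nonneg x),
    ← Real.sqrt_mul' _ (sq_nonneg _)]
  exact Real.sqrt_le_sqrt hsq

theorem dampedOscillator_star_mul_add_mul_eq_neg_smul (γ : ℝ) :
    star !![0, 1; -1, -γ] * !![2, γ; γ, 2] + !![2, γ; γ, 2] * !![0, 1; -1, -γ] =
      (-γ) • !![(2 : ℝ), γ; γ, 2] := by
  rw [Matrix.star_eq_conjTranspose, Matrix.conjTranspose_eq_transpose_of_trivial]
  ext i j
  fin_cases i <;> fin_cases j <;>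
    simp only [Matrix.add_apply, Matrix.mul_apply, Fin.sum_univ_two, Matrix.transpose_apply,
      Matrix.smul_apply, Matrix.of_apply, Matrix.cons_val', Matrix.cons_val_zero,
      Matrix.cons_val_one, Matrix.cons_val_fin_one, smul_eq_mul, Fin.zero_eta, Fin.mk_one] <;> ring

theorem inner_toEuclideanCLM_apply_self_fin_two (γ : ℝ) (x : EuclideanSpace ℝ (Fin 2)) :
    ⟪Matrix.toEuclideanCLM (𝕜 := ℝ) !![2, γ; γ, 2] x, x⟫ =
      2 * (x 0 ^ 2 + γ * x 0 * x 1 + x 1 ^ 2) := by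
  rw [real_inner_comm, Matrix.inner_toEuclideanCLM]
  simp only [dotProduct, Matrix.mulVec, Matrix.of_apply, Matrix.cons_val', Matrix.cons_val_fin_one,
    Fin.sum_univ_two, Matrix.cons_val_zero, Matrix.cons_val_one]
  ring

theorem EuclideanSpace.norm_sq_eq_fin_two (x : EuclideanSpace ℝ (Fin 2)) :
    ‖x‖ ^ 2 = x 0 ^ 2 + x 1 ^ 2 := by
  rw [EuclideanSpace.real_norm_sq_eq, Fin.sum_univ_two]

theorem sub_mul_norm_sq_le_inner_toEuclideanCLM {γ : ℝ} (hγ : 0 ≤ γ)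
    (x : EuclideanSpace ℝ (Fin 2)) :
    (2 - γ) * ‖x‖ ^ 2 ≤ ⟪Matrix.toEuclideanCLM (𝕜 := ℝ) !![2, γ; γ, 2] x, x⟫ := by
  rw [inner_toEuclideanCLM_apply_self_fin_two, EuclideanSpace.norm_sq_eq_fin_two]
  nlinarith [mul_nonneg hγ (sq_nonneg (x 0 + x 1))]

theorem inner_toEuclideanCLM_le_add_mul_norm_sq {γ : ℝ} (hγ : 0 ≤ γ)
    (x : EuclideanSpace ℝ (Fin 2)) :
    ⟪Matrix.toEuclideanCLM (𝕜 := ℝ) !![2, γ; γ, 2] x, x⟫ ≤ (2 + γ) * ‖x‖ ^ 2 := by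
  rw [inner_toEuclideanCLM_apply_self_fin_two, EuclideanSpace.norm_sq_eq_fin_two]
  nlinarith [mul_nonneg hγ (sq_nonneg (x 0 - x 1))]

theorem stmt4_general (γ : ℝ) (h0 : 0 < γ) (h2 : γ < 2) (t : ℝ) :
    ‖NormedSpace.exp (t • (Matrix.toEuclideanCLM (𝕜 := ℝ) (n := Fin 2) !![0, 1; -1, -γ]))‖ ≤
      Real.sqrt ((2 + γ) / (2 - γ)) * Real.exp (-γ * t / 2) := by
  set A := Matrix.toEuclideanCLM (𝕜 := ℝ) (n := Fin 2) !![0, 1; -1, -γ]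
  set P := Matrix.toEuclideanCLM (𝕜 := ℝ) (n := Fin 2) !![2, γ; γ, 2]
  have hlyap : star A * P + P * A = (-γ) • P := by
    simpa only [map_add, map_mul, map_star, map_smul] using
      congrArg (Matrix.toEuclideanCLM (𝕜 := ℝ) (n := Fin 2))
        (dampedOscillator_star_mul_add_mul_eq_neg_smul γ)
  calc _ ≤ √((2 + γ) / (2 - γ) * Real.exp (-γ * t)) :=
        ContinuousLinearMap.norm_le_sqrt_of_star_mul_mul_eq_smul (by linarith) (Real.exp_pos _).le
          (sub_mul_norm_sq_le_inner_toEuclideanCLM h0.le)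
          (inner_toEuclideanCLM_le_add_mul_norm_sq h0.le)
          (star_exp_smul_mul_mul_exp_smul (a := A) (p := P) hlyap t)
    _ = _ := by rw [Real.sqrt_mul (div_nonneg (by linarith) (by linarith)), ← Real.exp_half]

/-- For `0 < γ < 2` and `A = [[0, 1], [−1, −γ]]`, the spectral norm of the matrix
exponential satisfies `‖exp(At)‖₂ ≤ √((2+γ)/(2−γ)) · e^{−γt/2}` for all `t ≥ 0`.
The spectral norm is realized as the operator norm of the associated continuous linear map
on the Euclidean space `ℝ²`. -/
theorem stmt4 (γ : ℝ) (h0 : 0 < γ) (h2 : γ < 2) (t : ℝ) (ht : 0 ≤ t) :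
    ‖NormedSpace.exp (t • (Matrix.toEuclideanCLM (𝕜 := ℝ) (n := Fin 2) !![0, 1; -1, -γ]))‖ ≤
      Real.sqrt ((2 + γ) / (2 - γ)) * Real.exp (-γ * t / 2) :=
  stmt4_general γ h0 h2 t
end

section
/- Each step of the discretized system x_{n+1} = x_n + η(v_n − τ F(v_n, ηn) ⊙ x_n), v_{n+1,j} = v_{n,j} − η(Ω_j² x_{n,j} − τ J_j(x_n, ηn) − τ v_{n,j} G_j(x_n, ηn)) on ℝ^d × ℝ^d can be written as a composition of two affine coupling blocks: first the map (x_n, v_n) ↦ (x_n, v_{n+1}) with v_{n+1} = v_n ⊙ s(x_n) + t(x_n) where s(x_n) = (1 − ητ G(x_n, ηn)) and t(x_n) = −η(Ω² ⊙ x_n − τ J(x_n, ηn)), and then the map (x_n, v_{n+1}) ↦ (x_{n+1}, v_{n+1}) with x_{n+1} = x_n ⊙ s'(v_{n+1}) + t'(v_{n+1}) where s'(v_{n+1}) = 1 − ητ F(v_{n+1}, ηn) and t'(v_{n+1}) = η v_{n+1}. In particular, if F, G, J are polynomials, the resulting affine coupling network has polynomial non-linearities. -/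
noncomputable section

open Classical in
/-- An affine coupling block on `ℝ^ι`: a map `f(x_S, x_{Sᶜ}) = (x_S, x_{Sᶜ} ⊙ s(x_S) + t(x_S))`
for some coordinate subset `S` and functions `s, t` depending only on the coordinates
in `S`. -/
def IsAffineCouplingBlockOn {ι : Type*} (f : (ι → ℝ) → (ι → ℝ)) : Prop :=
  ∃ (S : Set ι) (s t : (ι → ℝ) → (ι → ℝ)),
    (∀ x y : ι → ℝ, (∀ i ∈ S, x i = y i) → s x = s y ∧ t x = t y) ∧
    ∀ (x : ι → ℝ) (i : ι), f x i = if i ∈ S then x i else x i * s x i + t x i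

/-- A map `ℝ^ι → ℝ^ι` each of whose coordinates is a polynomial. -/
def IsPolyMapOn {ι : Type*} (g : (ι → ℝ) → (ι → ℝ)) : Prop :=
  ∀ i : ι, ∃ q : MvPolynomial ι ℝ, ∀ x, g x i = MvPolynomial.eval x q

open Classical in
/-- An affine coupling block whose non-linearities `s, t` are polynomial maps. -/
def IsAffineCouplingBlockPolyOn {ι : Type*} (f : (ι → ℝ) → (ι → ℝ)) : Prop :=
  ∃ (S : Set ι) (s t : (ι → ℝ) → (ι → ℝ)),
    IsPolyMapOn s ∧ IsPolyMapOn t ∧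
    (∀ x y : ι → ℝ, (∀ i ∈ S, x i = y i) → s x = s y ∧ t x = t y) ∧
    ∀ (x : ι → ℝ) (i : ι), f x i = if i ∈ S then x i else x i * s x i + t x i

/-- A (time-dependent) map which, for each time, is given coordinatewise by polynomials
in the space variables. -/
def PolyInSpace {α β : Type*} (F : (α → ℝ) → ℝ → (β → ℝ)) : Prop :=
  ∀ (t : ℝ) (j : β), ∃ q : MvPolynomial α ℝ, ∀ z, F z t j = MvPolynomial.eval z q

/-- One step of the discretization of the Hénon-like system, performed as the two
triangular substeps `(x_n, v_n) ↦ (x_n, v_{n+1}) ↦ (x_{n+1}, v_{n+1})`: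
`v_{n+1,j} = v_{n,j} − η(Ω_j² x_{n,j} − τ J_j(x_n, ηn) − τ v_{n,j} G_j(x_n, ηn))` and
`x_{n+1} = x_n + η(v_{n+1} − τ F(v_{n+1}, ηn) ⊙ x_n)`.
Here `ℝ^{2d} = (Fin d ⊕ Fin d) → ℝ`, `inl` coordinates being `x` and `inr` being `v`. -/
def altEulerStep (d : ℕ) (τ η : ℝ) (F G J : (Fin d → ℝ) → ℝ → (Fin d → ℝ))
    (Ω : Fin d → ℕ) (n : ℕ) (z : (Fin d ⊕ Fin d) → ℝ) : (Fin d ⊕ Fin d) → ℝ :=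
  let newv : Fin d → ℝ := fun j =>
    z (Sum.inr j) - η * (((Ω j : ℝ)) ^ 2 * z (Sum.inl j) - τ * J (z ∘ Sum.inl) (η * n) j
      - τ * z (Sum.inr j) * G (z ∘ Sum.inl) (η * n) j)
  Sum.elim
    (fun j => z (Sum.inl j) + η * (newv j - τ * F newv (η * n) j * z (Sum.inl j)))
    newv

open MvPolynomial

-- `IsPolyMapOn`, with possibly different index types for the source and the target.
def IsPolynomialMap {α β : Type*} (g : (α → ℝ) → β → ℝ) : Prop :=
  ∀ j, ∃ q : MvPolynomial α ℝ, ∀ x, g x j = eval x q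

namespace IsPolynomialMap

variable {α β γ : Type*}

theorem const (c : β → ℝ) : IsPolynomialMap fun _ : α → ℝ => c :=
  fun j => ⟨C (c j), fun x => (eval_C _).symm⟩

theorem coord : IsPolynomialMap fun x : α → ℝ => x :=
  fun j => ⟨X j, fun x => (eval_X _).symm⟩

variable {f g : (α → ℝ) → β → ℝ}

theorem add (hf : IsPolynomialMap f) (hg : IsPolynomialMap g) :
    IsPolynomialMap fun x j => f x j + g x j := fun j => by
  obtain ⟨p, hp⟩ := hf j
  obtain ⟨q, hq⟩ := hg j
  exact ⟨p + q, fun x => by simp only [hp, hq, eval_add]⟩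

theorem sub (hf : IsPolynomialMap f) (hg : IsPolynomialMap g) :
    IsPolynomialMap fun x j => f x j - g x j := fun j => by
  obtain ⟨p, hp⟩ := hf j
  obtain ⟨q, hq⟩ := hg j
  exact ⟨p - q, fun x => by simp only [hp, hq, eval_sub]⟩

theorem mul (hf : IsPolynomialMap f) (hg : IsPolynomialMap g) :
    IsPolynomialMap fun x j => f x j * g x j := fun j => by
  obtain ⟨p, hp⟩ := hf j
  obtain ⟨q, hq⟩ := hg j
  exact ⟨p * q, fun x => by simp only [hp, hq, eval_mul]⟩

theorem comp_reindex (hf : IsPolynomialMap f) (e : α → γ) :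
    IsPolynomialMap fun z : γ → ℝ => f (z ∘ e) := fun j => by
  obtain ⟨p, hp⟩ := hf j
  exact ⟨rename e p, fun z => by simp only [hp, eval_rename]⟩

theorem sumElim {g : (α → ℝ) → γ → ℝ} (hf : IsPolynomialMap f) (hg : IsPolynomialMap g) :
    IsPolynomialMap fun x => Sum.elim (f x) (g x)
  | .inl j => hf j
  | .inr j => hg j

end IsPolynomialMap

theorem PolyInSpace.isPolynomialMap {α β : Type*} {F : (α → ℝ) → ℝ → β → ℝ}
    (hF : PolyInSpace F) (t : ℝ) : IsPolynomialMap fun z => F z t :=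
  hF t

section Coupling

variable {ι κ : Type*}

def couplingInr (s t : (ι → ℝ) → κ → ℝ) (z : ι ⊕ κ → ℝ) : ι ⊕ κ → ℝ :=
  Sum.elim (z ∘ Sum.inl) fun j => z (Sum.inr j) * s (z ∘ Sum.inl) j + t (z ∘ Sum.inl) j

def couplingInl (s t : (κ → ℝ) → ι → ℝ) (z : ι ⊕ κ → ℝ) : ι ⊕ κ → ℝ :=
  Sum.elim (fun i => z (Sum.inl i) * s (z ∘ Sum.inr) i + t (z ∘ Sum.inr) i) (z ∘ Sum.inr)

theorem isAffineCouplingBlockPolyOn_couplingInr {s t : (ι → ℝ) → κ → ℝ}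
    (hs : IsPolynomialMap s) (ht : IsPolynomialMap t) :
    IsAffineCouplingBlockPolyOn (couplingInr s t) := by
  classical
  refine ⟨Set.range Sum.inl, fun z => Sum.elim 0 (s (z ∘ Sum.inl)),
    fun z => Sum.elim 0 (t (z ∘ Sum.inl)),
    (IsPolynomialMap.const 0).sumElim (hs.comp_reindex _),
    (IsPolynomialMap.const 0).sumElim (ht.comp_reindex _), ?_, ?_⟩
  · intro x y hxy
    have hl : x ∘ Sum.inl = y ∘ Sum.inl := funext fun i => hxy _ ⟨i, rfl⟩
    simp only [hl, and_self]
  · rintro x (i | j) <;> simp [couplingInr]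

theorem isAffineCouplingBlockPolyOn_couplingInl {s t : (κ → ℝ) → ι → ℝ}
    (hs : IsPolynomialMap s) (ht : IsPolynomialMap t) :
    IsAffineCouplingBlockPolyOn (couplingInl s t) := by
  classical
  refine ⟨Set.range Sum.inr, fun z => Sum.elim (s (z ∘ Sum.inr)) 0,
    fun z => Sum.elim (t (z ∘ Sum.inr)) 0,
    (hs.comp_reindex _).sumElim (IsPolynomialMap.const 0),
    (ht.comp_reindex _).sumElim (IsPolynomialMap.const 0), ?_, ?_⟩
  · intro x y hxy
    have hr : x ∘ Sum.inr = y ∘ Sum.inr := funext fun j => hxy _ ⟨j, rfl⟩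
    simp only [hr, and_self]
  · rintro x (i | j) <;> simp [couplingInl]

end Coupling

theorem altEulerStep_eq_couplingInl_comp_couplingInr (d : ℕ) (τ η : ℝ)
    (F G J : (Fin d → ℝ) → ℝ → (Fin d → ℝ)) (Ω : Fin d → ℕ) (n : ℕ) :
    altEulerStep d τ η F G J Ω n =
      couplingInl (fun v j => 1 - η * τ * F v (η * n) j) (fun v j => η * v j) ∘
        couplingInr (fun x j => 1 + η * τ * G x (η * n) j)
          (fun x j => -η * ((Ω j : ℝ) ^ 2 * x j - τ * J x (η * n) j)) := by
  funext z i
  set w := couplingInr (fun x j => 1 + η * τ * G x (η * n) j)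
    (fun x j => -η * ((Ω j : ℝ) ^ 2 * x j - τ * J x (η * n) j)) z
  have hv : w ∘ Sum.inr = fun j =>
      z (Sum.inr j) - η * ((Ω j : ℝ) ^ 2 * z (Sum.inl j) - τ * J (z ∘ Sum.inl) (η * n) j
        - τ * z (Sum.inr j) * G (z ∘ Sum.inl) (η * n) j) := by
    funext j
    simp only [w, couplingInr, Function.comp_apply, Sum.elim_inr]
    ring
  rcases i with j | j
  · show _ = w (Sum.inl j) * (1 - η * τ * F (w ∘ Sum.inr) (η * n) j) + η * (w ∘ Sum.inr) j
    rw [hv, show w (Sum.inl j) = z (Sum.inl j) from rfl]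
    simp only [altEulerStep, Sum.elim_inl]
    ring
  · show _ = (w ∘ Sum.inr) j
    rw [hv]
    rfl

/-- **Each step of the discretized Hénon-like system is a composition of two affine
coupling blocks with polynomial non-linearities**: first
`(x_n, v_n) ↦ (x_n, v_n ⊙ s(x_n) + t(x_n))` and then
`(x_n, v_{n+1}) ↦ (x_n ⊙ s'(v_{n+1}) + t'(v_{n+1}), v_{n+1})`, with
`s'(v) = 1 − ητ F(v, ηn)` and `t'(v) = η v`. -/
theorem stmt9 (d : ℕ) (η τ : ℝ) (n : ℕ)
    (F G J : (Fin d → ℝ) → ℝ → (Fin d → ℝ)) (Ω : Fin d → ℕ)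
    (hF : PolyInSpace F) (hG : PolyInSpace G) (hJ : PolyInSpace J) :
    ∃ f₁ f₂ : ((Fin d ⊕ Fin d) → ℝ) → ((Fin d ⊕ Fin d) → ℝ),
      IsAffineCouplingBlockPolyOn f₁ ∧ IsAffineCouplingBlockPolyOn f₂ ∧
      altEulerStep d τ η F G J Ω n = f₂ ∘ f₁ ∧
      (∀ (z : (Fin d ⊕ Fin d) → ℝ) (j : Fin d), f₁ z (Sum.inl j) = z (Sum.inl j)) ∧
      (∀ (z : (Fin d ⊕ Fin d) → ℝ) (j : Fin d), f₂ z (Sum.inr j) = z (Sum.inr j)) ∧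
      (∀ (z : (Fin d ⊕ Fin d) → ℝ) (j : Fin d),
        f₂ z (Sum.inl j) =
          z (Sum.inl j) * (1 - η * τ * F (z ∘ Sum.inr) (η * n) j) + η * z (Sum.inr j)) := by
  open IsPolynomialMap in
  have hs₁ : IsPolynomialMap fun x j => 1 + η * τ * G x (η * n) j :=
    (const _).add ((const _).mul (hG.isPolynomialMap _))
  have ht₁ : IsPolynomialMap fun x j => -η * ((Ω j : ℝ) ^ 2 * x j - τ * J x (η * n) j) :=
    (const _).mul (((const _).mul coord).sub ((const _).mul (hJ.isPolynomialMap _)))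
  have hs₂ : IsPolynomialMap fun v j => 1 - η * τ * F v (η * n) j :=
    (const _).sub ((const _).mul (hF.isPolynomialMap _))
  have ht₂ : IsPolynomialMap fun (v : Fin d → ℝ) j => η * v j := (const _).mul coord
  exact ⟨_, _, isAffineCouplingBlockPolyOn_couplingInr hs₁ ht₁,
    isAffineCouplingBlockPolyOn_couplingInl hs₂ ht₂,
    altEulerStep_eq_couplingInl_comp_couplingInr d τ η F G J Ω n,
    fun _ _ => rfl, fun _ _ => rfl, fun _ _ => rfl⟩
end
end
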